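/- Let φ : ℝ^{n×s} → ℝ^N, J(A) = ‖φ(A)‖₁, δ_r(A) = inf{‖φ(A)−w‖₁ : ‖w‖₀ ≤ r}, and ξ_r the r-th concentration ratio of φ. If ξ_r < 1/2, then for all A, A' ∈ ℝ^{n×s}: ‖φ(A') − φ(A)‖₁ ≤ (1/(1 − 2ξ_r))·(δ_r(A') + δ_r(A)). -/

import Mathlib

open Finset

/-- The `r`-th concentration ratio of a map `φ : ℝ^{n×s} → ℝ^N`. -/
noncomputable def xi {n s N : ℕ} (φ : Matrix (Fin n) (Fin s) ℝ → (Fin N → ℝ)) (r : ℕ) : ℝ :=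
  sSup {c : ℝ | ∃ A A' : Matrix (Fin n) (Fin s) ℝ, ∃ T : Finset (Fin N),
    φ A ≠ φ A' ∧ T.card ≤ r ∧
    c = (∑ t ∈ T, |φ A t - φ A' t|) / (∑ t, |φ A t - φ A' t|)}

/-- The cost `J(A) = ‖φ(A)‖₁`. -/
noncomputable def Jcost {n s N : ℕ} (φ : Matrix (Fin n) (Fin s) ℝ → (Fin N → ℝ))
    (A : Matrix (Fin n) (Fin s) ℝ) : ℝ :=
  ∑ t, |φ A t|

/-- `δ_r(A)`: the ℓ¹ distance from `φ(A)` to the set of `r`-sparse vectors. -/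
noncomputable def deltaR {n s N : ℕ} (φ : Matrix (Fin n) (Fin s) ℝ → (Fin N → ℝ))
    (r : ℕ) (A : Matrix (Fin n) (Fin s) ℝ) : ℝ :=
  sInf {c : ℝ | ∃ w : Fin N → ℝ,
    (Finset.univ.filter (fun t => w t ≠ 0)).card ≤ r ∧ c = ∑ t, |φ A t - w t|}

/-!
Split the coordinates into the support `T` of an `r`-sparse vector `w` and its complement. On `T`,
`|y - x| ≤ |y| - |x| + 2|y - x|`; off `T`, `|y - x| ≤ |y| - |x| + 2|x|` and `|x| = |x - w|`.
Summing, and bounding the mass of `y - x` on `T` by `ξ_r ‖y - x‖₁`, gives the one-sided inequality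
`(1 - 2ξ_r) ‖φ(A') - φ(A)‖₁ ≤ J(A') - J(A) + 2δ_r(A)`. Adding it to the same inequality with `A`
and `A'` swapped cancels the `J` terms.
-/

section SparseSplitting

variable {ι : Type*} [Fintype ι] [DecidableEq ι]

lemma sum_abs_sub_le_sum_abs_sub_sum_abs_add (x y : ι → ℝ) (T : Finset ι) :
    ∑ t, |y t - x t| ≤
      ∑ t, |y t| - ∑ t, |x t| + 2 * (∑ t ∈ T, |y t - x t| + ∑ t ∈ Tᶜ, |x t|) := by
  have on_T : ∑ t ∈ T, |y t - x t| ≤ ∑ t ∈ T, (|y t| - |x t| + 2 * |y t - x t|) :=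
    Finset.sum_le_sum fun t _ => by
      linarith [abs_sub_abs_le_abs_sub (x t) (y t), abs_sub_comm (x t) (y t)]
  have off_T : ∑ t ∈ Tᶜ, |y t - x t| ≤ ∑ t ∈ Tᶜ, (|y t| - |x t| + 2 * |x t|) :=
    Finset.sum_le_sum fun t _ => by linarith [abs_sub (y t) (x t)]
  simp only [Finset.sum_add_distrib, Finset.sum_sub_distrib, ← Finset.mul_sum] at on_T off_T
  rw [← Finset.sum_add_sum_compl T, ← Finset.sum_add_sum_compl T (fun t => |y t|),
    ← Finset.sum_add_sum_compl T (fun t => |x t|)]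
  linarith

lemma sum_compl_support_abs_le_sum_abs_sub (x w : ι → ℝ) :
    ∑ t ∈ (Finset.univ.filter fun t => w t ≠ 0)ᶜ, |x t| ≤ ∑ t, |x t - w t| :=
  calc ∑ t ∈ (Finset.univ.filter fun t => w t ≠ 0)ᶜ, |x t|
      = ∑ t ∈ (Finset.univ.filter fun t => w t ≠ 0)ᶜ, |x t - w t| :=
        Finset.sum_congr rfl fun t ht => by
          rw [show w t = 0 by simpa using ht, sub_zero]
    _ ≤ ∑ t, |x t - w t| :=
        Finset.sum_le_sum_of_subset_of_nonneg (Finset.subset_univ _) fun _ _ _ => abs_nonneg _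

end SparseSplitting

section ConcentrationRatio

variable {n s N : ℕ} (φ : Matrix (Fin n) (Fin s) ℝ → (Fin N → ℝ)) (r : ℕ)

lemma xi_bddAbove :
    BddAbove {c : ℝ | ∃ A A' : Matrix (Fin n) (Fin s) ℝ, ∃ T : Finset (Fin N),
      φ A ≠ φ A' ∧ T.card ≤ r ∧
      c = (∑ t ∈ T, |φ A t - φ A' t|) / (∑ t, |φ A t - φ A' t|)} := by
  refine ⟨1, ?_⟩
  rintro c ⟨A, A', T, -, -, rfl⟩
  exact div_le_one_of_le₀
    (Finset.sum_le_sum_of_subset_of_nonneg (Finset.subset_univ T) fun _ _ _ => abs_nonneg _)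
    (Finset.sum_nonneg fun _ _ => abs_nonneg _)

lemma sum_abs_sub_le_xi_mul (A A' : Matrix (Fin n) (Fin s) ℝ) {T : Finset (Fin N)}
    (hT : T.card ≤ r) :
    ∑ t ∈ T, |φ A t - φ A' t| ≤ xi φ r * ∑ t, |φ A t - φ A' t| := by
  obtain heq | hne := eq_or_ne (φ A) (φ A')
  · simp [heq]
  have hpos : 0 < ∑ t, |φ A t - φ A' t| := by
    obtain ⟨t, ht⟩ := Function.ne_iff.mp hne
    exact Finset.sum_pos' (fun _ _ => abs_nonneg _)
      ⟨t, Finset.mem_univ t, abs_pos.mpr (sub_ne_zero.mpr ht)⟩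
  rw [← div_le_iff₀ hpos]
  exact le_csSup (xi_bddAbove φ r) ⟨A, A', T, hne, hT, rfl⟩

lemma one_sub_two_mul_xi_mul_sum_abs_sub_le (A A' : Matrix (Fin n) (Fin s) ℝ) :
    (1 - 2 * xi φ r) * ∑ t, |φ A' t - φ A t| ≤
      Jcost φ A' - Jcost φ A + 2 * deltaR φ r A := by
  suffices h : ((1 - 2 * xi φ r) * ∑ t, |φ A' t - φ A t| - (Jcost φ A' - Jcost φ A)) / 2 ≤
      deltaR φ r A by linarith
  refine le_csInf ⟨_, 0, by simp, rfl⟩ ?_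
  rintro c ⟨w, hw, rfl⟩
  have hsplit := sum_abs_sub_le_sum_abs_sub_sum_abs_add (φ A) (φ A')
    (Finset.univ.filter fun t => w t ≠ 0)
  have hconc := sum_abs_sub_le_xi_mul φ r A' A hw
  have hsparse := sum_compl_support_abs_le_sum_abs_sub (φ A) w
  unfold Jcost
  linarith

end ConcentrationRatio

/-- Symmetrized inequality: if `ξ_r < 1/2` then
`‖φ(A')−φ(A)‖₁ ≤ (δ_r(A')+δ_r(A))/(1−2ξ_r)` for all `A, A'`. -/
theorem stmt_5 {n s N : ℕ} (φ : Matrix (Fin n) (Fin s) ℝ → (Fin N → ℝ))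
    (r : ℕ) (hxi : xi φ r < 1 / 2)
    (A A' : Matrix (Fin n) (Fin s) ℝ) :
    (∑ t, |φ A' t - φ A t|) ≤
      (1 / (1 - 2 * xi φ r)) * (deltaR φ r A' + deltaR φ r A) := by
  have h := one_sub_two_mul_xi_mul_sum_abs_sub_le φ r A A'
  have h' := one_sub_two_mul_xi_mul_sum_abs_sub_le φ r A' A
  rw [Finset.sum_congr rfl fun t _ => abs_sub_comm (φ A t) (φ A' t)] at h'
  rw [one_div, inv_mul_eq_div, le_div_iff₀ (by linarith)]
  linarith
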